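/- arXiv:2604.02094 — 3 statements merged into one kernel-verified Lean document; each statement's English description precedes it below -/
import Mathlib

section
/- Fix y ∈ 𝒴 and assume g(y,x) > 0 for all x ∈ 𝒳 and G := sup_{x∈𝒳} g(y,x) < ∞. Then for every bounded measurable f : 𝒳 → ℝ, every N ≥ 1 and p ∈ {1,2}, the self-normalized importance sampling estimator satisfies ( ∫_{𝒳^N} | π_y(f) − π_y^N(f) |^p dπ₀^{⊗N} )^{1/p} ≤ 2 · ‖f‖_∞ · G / ( Z(y) · √N ). In particular the L^p error decays at the Monte Carlo rate O(N^{-1/2}) with constant C_y := 2G/Z(y). -/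
open MeasureTheory


lemma snis_bdd_integrable {α : Type*} [MeasurableSpace α] {μ : Measure α} [IsFiniteMeasure μ]
    {h : α → ℝ} (hm : AEStronglyMeasurable h μ) (C : ℝ) (hC : ∀ x, |h x| ≤ C) :
    Integrable h μ :=
  memLp_one_iff_integrable.mp (MemLp.of_bound hm C (ae_of_all _ (by
    simpa [Real.norm_eq_abs] using hC)))

lemma snis_var_bound {X : Type*} [MeasurableSpace X] (π₀ : Measure X) [IsProbabilityMeasure π₀]
    (h : X → ℝ) (hm : Measurable h) (C : ℝ) (hC : ∀ x, |h x| ≤ C) (N : ℕ) :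
    ∫ xs : Fin N → X, (∑ i, (h (xs i) - ∫ x, h x ∂π₀)) ^ 2 ∂(Measure.pi fun _ => π₀)
      ≤ N * C ^ 2 := by
  classical
  letI : MeasureSpace X := ⟨π₀⟩
  set μ := ∫ x, h x ∂π₀ with hμdef
  set h₀ : X → ℝ := fun x => h x - μ with hh₀
  have hm₀ : Measurable h₀ := hm.sub measurable_const
  have hb₀ : ∀ x, |h₀ x| ≤ C + |μ| := by
    intro x
    calc |h x - μ| ≤ |h x| + |μ| := abs_sub _ _
    _ ≤ C + |μ| := by gcongr; exact hC x
  have hinth : Integrable h π₀ := snis_bdd_integrable hm.aestronglyMeasurable C hC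
  have hμ₀ : ∫ x, h₀ x ∂π₀ = 0 := by
    simp [hh₀, integral_sub hinth (integrable_const μ), measure_univ, ← hμdef]
  have key : ∀ F : Fin N → X → ℝ,
      (∫ xs : Fin N → X, ∏ k, F k (xs k) ∂(Measure.pi fun _ => π₀)) = ∏ k, ∫ x, F k x ∂π₀ :=
    fun F => MeasureTheory.integral_fintype_prod_eq_prod F
  have hdiag : ∀ i : Fin N, (∫ xs : Fin N → X, h₀ (xs i) * h₀ (xs i) ∂(Measure.pi fun _ => π₀))
      = ∫ x, h₀ x * h₀ x ∂π₀ := by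
    intro i
    set F : Fin N → X → ℝ := fun k => if k = i then (fun x => h₀ x * h₀ x) else fun _ => 1 with hF
    have e1 : ∀ xs : Fin N → X, h₀ (xs i) * h₀ (xs i) = ∏ k, F k (xs k) := by
      intro xs
      rw [Finset.prod_eq_single i (fun k _ hk => by simp [hF, hk]) (by simp)]
      simp [hF]
    calc (∫ xs : Fin N → X, h₀ (xs i) * h₀ (xs i) ∂(Measure.pi fun _ => π₀))
        = ∫ xs : Fin N → X, ∏ k, F k (xs k) ∂(Measure.pi fun _ => π₀) :=
          integral_congr_ae (ae_of_all _ e1)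
      _ = ∏ k, ∫ x, F k x ∂π₀ := key F
      _ = ∫ x, h₀ x * h₀ x ∂π₀ := by
          rw [Finset.prod_eq_single i (fun k _ hk => by simp [hF, hk]) (by simp)]
          simp [hF]
  have hoff : ∀ i j : Fin N, i ≠ j →
      (∫ xs : Fin N → X, h₀ (xs i) * h₀ (xs j) ∂(Measure.pi fun _ => π₀)) = 0 := by
    intro i j hij
    set F : Fin N → X → ℝ := fun k => if k = i then h₀ else if k = j then h₀ else fun _ => 1 with hF
    have e1 : ∀ xs : Fin N → X, h₀ (xs i) * h₀ (xs j) = ∏ k, F k (xs k) := by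
      intro xs
      rw [← Finset.mul_prod_erase Finset.univ (fun k => F k (xs k)) (Finset.mem_univ i),
        ← Finset.mul_prod_erase _ (fun k => F k (xs k))
          (Finset.mem_erase.mpr ⟨Ne.symm hij, Finset.mem_univ j⟩),
        Finset.prod_eq_one (fun k hk => ?_)]
      · simp [hF, Ne.symm hij]
      · have hkj : k ≠ j := (Finset.mem_erase.mp hk).1
        have hki : k ≠ i := (Finset.mem_erase.mp (Finset.mem_erase.mp hk).2).1
        simp [hF, hki, hkj]
    calc (∫ xs : Fin N → X, h₀ (xs i) * h₀ (xs j) ∂(Measure.pi fun _ => π₀))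
        = ∫ xs : Fin N → X, ∏ k, F k (xs k) ∂(Measure.pi fun _ => π₀) :=
          integral_congr_ae (ae_of_all _ e1)
      _ = ∏ k, ∫ x, F k x ∂π₀ := key F
      _ = 0 := Finset.prod_eq_zero (Finset.mem_univ i) (by simp [hF, hμ₀])
  -- second moment bound
  have hdiag_le : ∫ x, h₀ x * h₀ x ∂π₀ ≤ C ^ 2 := by
    have hi2 : Integrable (fun x => h x * h x) π₀ := by
      refine snis_bdd_integrable (hm.mul hm).aestronglyMeasurable (C ^ 2) (fun x => ?_)
      rw [abs_mul]
      nlinarith [hC x, abs_nonneg (h x)]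
    have e : (fun x => h₀ x * h₀ x) = fun x => (h x * h x - (2 * μ) * h x) + μ ^ 2 := by
      funext x; simp only [hh₀]; ring
    have hC2 : ∫ x, h x * h x ∂π₀ ≤ C ^ 2 := by
      calc ∫ x, h x * h x ∂π₀ ≤ ∫ _x, C ^ 2 ∂π₀ := by
            refine integral_mono hi2 (integrable_const _) (fun x => ?_)
            nlinarith [hC x, abs_nonneg (h x), le_abs_self (h x), neg_abs_le (h x)]
        _ = C ^ 2 := by simp [measure_univ]
    rw [e, integral_add (f := fun x => h x * h x - 2 * μ * h x) (g := fun _ => μ ^ 2)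
        (hi2.sub (hinth.const_mul _)) (integrable_const _),
      integral_sub (f := fun x => h x * h x) (g := fun x => 2 * μ * h x) hi2 (hinth.const_mul _),
      integral_const_mul, integral_const, probReal_univ]
    simp only [ENNReal.toReal_one, one_smul, ← hμdef]
    nlinarith [sq_nonneg μ]
  -- expand the square of the sum
  have hterm : ∀ i j : Fin N,
      Integrable (fun xs : Fin N → X => h₀ (xs i) * h₀ (xs j)) (Measure.pi fun _ => π₀) := by
    intro i j
    refine snis_bdd_integrable
      (((hm₀.comp (measurable_pi_apply i)).mul (hm₀.comp (measurable_pi_apply j))).aestronglyMeasurable)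
      ((C + |μ|) ^ 2) (fun xs => ?_)
    rw [abs_mul]
    nlinarith [hb₀ (xs i), hb₀ (xs j), abs_nonneg (h₀ (xs i)), abs_nonneg (h₀ (xs j))]
  have expand : ∀ xs : Fin N → X,
      (∑ i, (h (xs i) - μ)) ^ 2 = ∑ i, ∑ j, h₀ (xs i) * h₀ (xs j) := by
    intro xs
    rw [sq, Finset.sum_mul_sum]
  calc ∫ xs : Fin N → X, (∑ i, (h (xs i) - μ)) ^ 2 ∂(Measure.pi fun _ => π₀)
      = ∫ xs : Fin N → X, ∑ i, ∑ j, h₀ (xs i) * h₀ (xs j) ∂(Measure.pi fun _ => π₀) :=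
        integral_congr_ae (ae_of_all _ expand)
    _ = ∑ i, ∑ j, ∫ xs : Fin N → X, h₀ (xs i) * h₀ (xs j) ∂(Measure.pi fun _ => π₀) := by
        rw [integral_finset_sum _ (fun i _ => integrable_finset_sum _ (fun j _ => hterm i j))]
        exact Finset.sum_congr rfl (fun i _ => integral_finset_sum _ (fun j _ => hterm i j))
    _ = ∑ i : Fin N, ∫ x, h₀ x * h₀ x ∂π₀ := by
        refine Finset.sum_congr rfl (fun i _ => ?_)
        rw [Finset.sum_eq_single i (fun j _ hj => hoff i j (Ne.symm hj)) (by simp), hdiag i]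
    _ = N * ∫ x, h₀ x * h₀ x ∂π₀ := by
        rw [Finset.sum_const, Finset.card_univ, Fintype.card_fin, nsmul_eq_mul]
    _ ≤ N * C ^ 2 := by
        apply mul_le_mul_of_nonneg_left hdiag_le (Nat.cast_nonneg N)

lemma snis_mean_sq {X : Type*} [MeasurableSpace X] (π₀ : Measure X) [IsProbabilityMeasure π₀]
    (h : X → ℝ) (hm : Measurable h) (C : ℝ) (hC : ∀ x, |h x| ≤ C) (N : ℕ) (hN : 1 ≤ N) :
    ∫ xs : Fin N → X, ((∑ i, h (xs i)) / N - ∫ x, h x ∂π₀) ^ 2 ∂(Measure.pi fun _ => π₀)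
      ≤ C ^ 2 / N := by
  have hNpos : (0 : ℝ) < N := by exact_mod_cast hN
  have hvar := snis_var_bound π₀ h hm C hC N
  have e : ∀ xs : Fin N → X,
      ((∑ i, h (xs i)) / N - ∫ x, h x ∂π₀) ^ 2
        = (∑ i, (h (xs i) - ∫ x, h x ∂π₀)) ^ 2 / (N : ℝ) ^ 2 := by
    intro xs
    rw [Finset.sum_sub_distrib, Finset.sum_const, Finset.card_univ, Fintype.card_fin,
      nsmul_eq_mul]
    field_simp
  rw [integral_congr_ae (ae_of_all _ e), integral_div]
  rw [div_le_div_iff₀ (by positivity) hNpos]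
  calc (∫ xs : Fin N → X, (∑ i, (h (xs i) - ∫ x, h x ∂π₀)) ^ 2 ∂(Measure.pi fun _ => π₀)) * N
      ≤ (N * C ^ 2) * N := by
        apply mul_le_mul_of_nonneg_right hvar (le_of_lt hNpos)
    _ = C ^ 2 * (N : ℝ) ^ 2 := by ring

lemma snis_ratio_bd {ι : Type*} {s : Finset ι} (hs : s.Nonempty) (φ ψ : ι → ℝ) (M : ℝ)
    (hψ : ∀ i ∈ s, 0 < ψ i) (hb : ∀ i ∈ s, |φ i| ≤ M * ψ i) :
    |(∑ i ∈ s, φ i) / (∑ i ∈ s, ψ i)| ≤ M := by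
  have hpos : 0 < ∑ i ∈ s, ψ i := Finset.sum_pos hψ hs
  rw [abs_div, abs_of_pos hpos, div_le_iff₀ hpos]
  calc |∑ i ∈ s, φ i| ≤ ∑ i ∈ s, |φ i| := Finset.abs_sum_le_sum_abs _ _
    _ ≤ ∑ i ∈ s, M * ψ i := Finset.sum_le_sum hb
    _ = M * ∑ i ∈ s, ψ i := by rw [Finset.mul_sum]

lemma snis_L2_sq {X : Type*} [MeasurableSpace X] (π₀ : Measure X) [IsProbabilityMeasure π₀]
    (φ ψ : X → ℝ) (hφm : Measurable φ) (hψm : Measurable ψ) (hψpos : ∀ x, 0 < ψ x)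
    (M G : ℝ) (hM0 : 0 ≤ M) (hG0 : 0 < G)
    (hφb : ∀ x, |φ x| ≤ M * ψ x) (hψb : ∀ x, ψ x ≤ G)
    (hZ : 0 < ∫ x, ψ x ∂π₀) (N : ℕ) (hN : 1 ≤ N) :
    ∫ xs : Fin N → X,
        ((∫ x, φ x ∂π₀) / (∫ x, ψ x ∂π₀) - (∑ i, φ (xs i)) / (∑ j, ψ (xs j))) ^ 2
        ∂(Measure.pi fun _ => π₀)
      ≤ (2 * M * G / ((∫ x, ψ x ∂π₀) * Real.sqrt N)) ^ 2 := by
  classical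
  haveI : Nonempty (Fin N) := Fin.pos_iff_nonempty.mp hN
  have hNpos : (0 : ℝ) < N := by exact_mod_cast hN
  set Z := ∫ x, ψ x ∂π₀ with hZdef
  set J := ∫ x, φ x ∂π₀ with hJdef
  have hψG : ∀ x, |ψ x| ≤ G := fun x => by
    rw [abs_of_pos (hψpos x)]; exact hψb x
  have hφG : ∀ x, |φ x| ≤ M * G := fun x =>
    (hφb x).trans (mul_le_mul_of_nonneg_left (hψb x) hM0)
  have hJb : |J| ≤ M * G := by
    have hint : Integrable φ π₀ := snis_bdd_integrable hφm.aestronglyMeasurable _ hφG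
    calc |J| ≤ ∫ x, |φ x| ∂π₀ := by
          simpa [Real.norm_eq_abs] using norm_integral_le_integral_norm (μ := π₀) φ
      _ ≤ ∫ _x, M * G ∂π₀ := integral_mono hint.abs (integrable_const _) hφG
      _ = M * G := by simp [measure_univ]
  -- notation-free pointwise bound
  have hSgpos : ∀ xs : Fin N → X, 0 < ∑ j, ψ (xs j) :=
    fun xs => Finset.sum_pos (fun j _ => hψpos (xs j)) Finset.univ_nonempty
  have hratio : ∀ xs : Fin N → X, |(∑ i, φ (xs i)) / (∑ j, ψ (xs j))| ≤ M := fun xs =>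
    snis_ratio_bd Finset.univ_nonempty _ _ M (fun j _ => hψpos (xs j)) (fun i _ => hφb (xs i))
  have hsumφ : ∀ xs : Fin N → X, |(∑ i, φ (xs i)) / N| ≤ M * G := by
    intro xs
    rw [abs_div, abs_of_pos hNpos, div_le_iff₀ hNpos]
    calc |∑ i, φ (xs i)| ≤ ∑ i, |φ (xs i)| := Finset.abs_sum_le_sum_abs _ _
      _ ≤ ∑ _i : Fin N, M * G := Finset.sum_le_sum (fun i _ => hφG (xs i))
      _ = N * (M * G) := by rw [Finset.sum_const, Finset.card_univ, Fintype.card_fin, nsmul_eq_mul]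
      _ = M * G * N := by ring
  have hsumψ : ∀ xs : Fin N → X, |(∑ j, ψ (xs j)) / N| ≤ G := by
    intro xs
    rw [abs_div, abs_of_pos hNpos, div_le_iff₀ hNpos]
    calc |∑ j, ψ (xs j)| ≤ ∑ j, |ψ (xs j)| := Finset.abs_sum_le_sum_abs _ _
      _ ≤ ∑ _j : Fin N, G := Finset.sum_le_sum (fun j _ => hψG (xs j))
      _ = N * G := by rw [Finset.sum_const, Finset.card_univ, Fintype.card_fin, nsmul_eq_mul]
      _ = G * N := by ring
  -- pointwise inequality
  have hpt : ∀ xs : Fin N → X,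
      (J / Z - (∑ i, φ (xs i)) / (∑ j, ψ (xs j))) ^ 2
        ≤ (2 * ((∑ i, φ (xs i)) / N - J) ^ 2 + 2 * M ^ 2 * ((∑ j, ψ (xs j)) / N - Z) ^ 2) / Z ^ 2 := by
    intro xs
    set a := (∑ i, φ (xs i)) / N - J with ha
    set b := (∑ j, ψ (xs j)) / N - Z with hb
    set r := (∑ i, φ (xs i)) / (∑ j, ψ (xs j)) with hr
    have hident : J / Z - r = (-a + r * b) / Z := by
      rw [ha, hb, hr]
      field_simp [hZ.ne', (hSgpos xs).ne', hNpos.ne']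
      ring
    have habs : |J / Z - r| ≤ (|a| + M * |b|) / Z := by
      rw [hident, abs_div, abs_of_pos hZ]
      apply (div_le_div_iff_of_pos_right hZ).mpr
      calc |(-a + r * b)| ≤ |(-a)| + |r * b| := abs_add_le _ _
        _ = |a| + |r| * |b| := by rw [abs_neg, abs_mul]
        _ ≤ |a| + M * |b| := by gcongr; exact hratio xs
    have h1 : (J / Z - r) ^ 2 ≤ ((|a| + M * |b|) / Z) ^ 2 := by
      rw [← sq_abs (J / Z - r)]
      apply pow_le_pow_left₀ (abs_nonneg _) habs
    refine h1.trans ?_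
    rw [div_pow]
    apply (div_le_div_iff_of_pos_right (pow_pos hZ 2)).mpr
    nlinarith [sq_abs a, sq_abs b, sq_nonneg (|a| - M * |b|), abs_nonneg a, abs_nonneg b]
  -- integrability
  have hSφm : Measurable (fun xs : Fin N → X => ∑ i, φ (xs i)) :=
    Finset.measurable_sum _ (fun i _ => hφm.comp (measurable_pi_apply i))
  have hSψm : Measurable (fun xs : Fin N → X => ∑ j, ψ (xs j)) :=
    Finset.measurable_sum _ (fun j _ => hψm.comp (measurable_pi_apply j))
  have hAm : Measurable (fun xs : Fin N → X => ((∑ i, φ (xs i)) / N - J) ^ 2) :=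
    ((hSφm.div_const _).sub measurable_const).pow_const 2
  have hBm : Measurable (fun xs : Fin N → X => ((∑ j, ψ (xs j)) / N - Z) ^ 2) :=
    ((hSψm.div_const _).sub measurable_const).pow_const 2
  have hAb : ∀ xs : Fin N → X, |((∑ i, φ (xs i)) / N - J)| ≤ 2 * (M * G) := by
    intro xs
    calc |(∑ i, φ (xs i)) / N - J| ≤ |(∑ i, φ (xs i)) / N| + |J| := abs_sub _ _
      _ ≤ M * G + M * G := add_le_add (hsumφ xs) hJb
      _ = 2 * (M * G) := by ring
  have hZG : Z ≤ G := by
    have hint : Integrable ψ π₀ := snis_bdd_integrable hψm.aestronglyMeasurable _ hψG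
    calc Z ≤ ∫ _x, G ∂π₀ := integral_mono hint (integrable_const _) hψb
      _ = G := by simp [measure_univ]
  have hBb : ∀ xs : Fin N → X, |((∑ j, ψ (xs j)) / N - Z)| ≤ 2 * G := by
    intro xs
    have hZabs : |Z| ≤ G := by rw [abs_of_pos hZ]; exact hZG
    calc |(∑ j, ψ (xs j)) / N - Z| ≤ |(∑ j, ψ (xs j)) / N| + |Z| := abs_sub _ _
      _ ≤ G + G := add_le_add (hsumψ xs) hZabs
      _ = 2 * G := by ring
  have sq_abs_bd : ∀ (u K : ℝ), |u| ≤ K → |u ^ 2| ≤ K ^ 2 := by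
    intro u K h
    rw [abs_pow, ← sq_abs]
    exact pow_le_pow_left₀ (abs_nonneg _) (by rwa [abs_abs]) 2
  have hAint : Integrable (fun xs : Fin N → X => ((∑ i, φ (xs i)) / N - J) ^ 2)
      (Measure.pi fun _ => π₀) :=
    snis_bdd_integrable hAm.aestronglyMeasurable _ (fun xs => sq_abs_bd _ _ (hAb xs))
  have hBint : Integrable (fun xs : Fin N → X => ((∑ j, ψ (xs j)) / N - Z) ^ 2)
      (Measure.pi fun _ => π₀) :=
    snis_bdd_integrable hBm.aestronglyMeasurable _ (fun xs => sq_abs_bd _ _ (hBb xs))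
  have hDm : Measurable (fun xs : Fin N → X =>
      (J / Z - (∑ i, φ (xs i)) / (∑ j, ψ (xs j))) ^ 2) :=
    (measurable_const.sub (hSφm.div hSψm)).pow_const 2
  have hDb : ∀ xs : Fin N → X, |J / Z - (∑ i, φ (xs i)) / (∑ j, ψ (xs j))| ≤ |J / Z| + M := by
    intro xs
    calc |J / Z - (∑ i, φ (xs i)) / (∑ j, ψ (xs j))|
        ≤ |J / Z| + |(∑ i, φ (xs i)) / (∑ j, ψ (xs j))| := abs_sub _ _
      _ ≤ |J / Z| + M := by gcongr; exact hratio xs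
  have hDint : Integrable (fun xs : Fin N → X =>
      (J / Z - (∑ i, φ (xs i)) / (∑ j, ψ (xs j))) ^ 2) (Measure.pi fun _ => π₀) :=
    snis_bdd_integrable hDm.aestronglyMeasurable _ (fun xs => sq_abs_bd _ _ (hDb xs))
  have hRint : Integrable (fun xs : Fin N → X =>
      (2 * ((∑ i, φ (xs i)) / N - J) ^ 2 + 2 * M ^ 2 * ((∑ j, ψ (xs j)) / N - Z) ^ 2) / Z ^ 2)
      (Measure.pi fun _ => π₀) :=
    (((hAint.const_mul 2).add (hBint.const_mul (2 * M ^ 2))).div_const _)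
  -- the integral bounds from the mean-square lemma
  have hA2 := snis_mean_sq π₀ φ hφm (M * G) hφG N hN
  have hB2 := snis_mean_sq π₀ ψ hψm G hψG N hN
  -- put everything together
  have hsqrtN : Real.sqrt N ^ 2 = (N : ℝ) := Real.sq_sqrt (Nat.cast_nonneg N)
  calc ∫ xs : Fin N → X,
        (J / Z - (∑ i, φ (xs i)) / (∑ j, ψ (xs j))) ^ 2 ∂(Measure.pi fun _ => π₀)
      ≤ ∫ xs : Fin N → X,
          (2 * ((∑ i, φ (xs i)) / N - J) ^ 2 + 2 * M ^ 2 * ((∑ j, ψ (xs j)) / N - Z) ^ 2) / Z ^ 2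
          ∂(Measure.pi fun _ => π₀) := integral_mono hDint hRint hpt
    _ = (2 * (∫ xs : Fin N → X, ((∑ i, φ (xs i)) / N - J) ^ 2 ∂(Measure.pi fun _ => π₀))
          + 2 * M ^ 2 * (∫ xs : Fin N → X, ((∑ j, ψ (xs j)) / N - Z) ^ 2 ∂(Measure.pi fun _ => π₀)))
          / Z ^ 2 := by
        rw [integral_div, integral_add (hAint.const_mul 2) (hBint.const_mul (2 * M ^ 2)),
          integral_const_mul, integral_const_mul]
    _ ≤ (2 * ((M * G) ^ 2 / N) + 2 * M ^ 2 * (G ^ 2 / N)) / Z ^ 2 := by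
        apply (div_le_div_iff_of_pos_right (pow_pos hZ 2)).mpr
        have hBnn : (0:ℝ) ≤ ∫ xs : Fin N → X, ((∑ j, ψ (xs j)) / N - Z) ^ 2 ∂(Measure.pi fun _ => π₀) :=
          integral_nonneg (fun xs => sq_nonneg _)
        nlinarith [hA2, hB2, sq_nonneg M]
    _ = (2 * M * G / (Z * Real.sqrt N)) ^ 2 := by
        rw [div_pow, mul_pow Z, hsqrtN]
        field_simp
        ring

/-- For a fixed observation `y` with `g(y,·) > 0` and
`G := sup_x g(y,x) < ∞`, the self-normalized importance sampling estimator satisfies,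
for every bounded measurable `f`, every `N ≥ 1` and `p ∈ {1,2}`,
`( E[ |π_y(f) − π_y^N(f)|^p ] )^{1/p} ≤ 2 ‖f‖_∞ G / (Z(y) √N)`. -/
theorem stmt3 {X : Type*} [MeasurableSpace X] {dy : ℕ}
    (π₀ : Measure X) [IsProbabilityMeasure π₀]
    (g : (Fin dy → ℝ) → X → ℝ)
    (hg_meas : Measurable (Function.uncurry g))
    (hg_pos : ∀ y x, 0 < g y x)
    (hg_norm : ∀ x, ∫ y, g y x = 1)
    (hg_L2 : ∀ y, MemLp (g y) 2 π₀)
    (y : Fin dy → ℝ) (hG : BddAbove (Set.range (g y)))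
    (hZ : 0 < ∫ x, g y x ∂π₀)
    (f : X → ℝ) (hf : Measurable f) (hfb : BddAbove (Set.range fun x => |f x|))
    (N : ℕ) (hN : 1 ≤ N)
    (p : ℕ) (hp : p = 1 ∨ p = 2) :
    (∫ xs : Fin N → X,
        |(∫ x, f x * g y x ∂π₀) / (∫ x, g y x ∂π₀)
            - (∑ i, f (xs i) * g y (xs i)) / (∑ j, g y (xs j))| ^ (p : ℝ)
        ∂(Measure.pi fun _ => π₀)) ^ (1 / (p : ℝ))
      ≤ 2 * (⨆ x, |f x|) * (⨆ x, g y x) / ((∫ x, g y x ∂π₀) * Real.sqrt N) := by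
  classical
  have hne : Nonempty X := by
    by_contra hc
    rw [not_nonempty_iff] at hc
    have h1 : π₀ Set.univ = 1 := measure_univ
    rw [Set.univ_eq_empty_iff.mpr hc, measure_empty] at h1
    exact one_ne_zero h1.symm
  obtain ⟨x₀⟩ := hne
  haveI : Nonempty (Fin N) := Fin.pos_iff_nonempty.mp hN
  set M := ⨆ x, |f x| with hMdef
  set G := ⨆ x, g y x with hGdef
  set Z := ∫ x, g y x ∂π₀ with hZdef
  set J := ∫ x, f x * g y x ∂π₀ with hJdef
  have hMle : ∀ x, |f x| ≤ M := fun x => le_ciSup hfb x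
  have hGle : ∀ x, g y x ≤ G := fun x => le_ciSup hG x
  have hM0 : 0 ≤ M := (abs_nonneg (f x₀)).trans (hMle x₀)
  have hG0 : 0 < G := (hg_pos y x₀).trans_le (hGle x₀)
  have hgy : Measurable (g y) := hg_meas.comp (measurable_const.prodMk measurable_id)
  have hfg : Measurable fun x => f x * g y x := hf.mul hgy
  have hφb : ∀ x, |f x * g y x| ≤ M * g y x := by
    intro x
    rw [abs_mul, abs_of_pos (hg_pos y x)]
    exact mul_le_mul_of_nonneg_right (hMle x) (hg_pos y x).le
  have hL2 := snis_L2_sq π₀ (fun x => f x * g y x) (g y) hfg hgy (hg_pos y)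
    M G hM0 hG0 hφb hGle hZ N hN
  set R := 2 * M * G / (Z * Real.sqrt N) with hRdef
  have hR0 : 0 ≤ R := by
    apply div_nonneg
    · nlinarith
    · exact mul_nonneg hZ.le (Real.sqrt_nonneg _)
  have hDnn : (0:ℝ) ≤ ∫ xs : Fin N → X,
      (J / Z - (∑ i, f (xs i) * g y (xs i)) / (∑ j, g y (xs j))) ^ 2
        ∂(Measure.pi fun _ => π₀) := integral_nonneg fun xs => sq_nonneg _
  rcases hp with hp | hp <;> subst hp
  · -- p = 1
    simp only [Nat.cast_one, Real.rpow_one, one_div_one]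
    -- measurability and bounds of the integrand
    have hSφm : Measurable (fun xs : Fin N → X => ∑ i, f (xs i) * g y (xs i)) :=
      Finset.measurable_sum _ (fun i _ => hfg.comp (measurable_pi_apply i))
    have hSψm : Measurable (fun xs : Fin N → X => ∑ j, g y (xs j)) :=
      Finset.measurable_sum _ (fun j _ => hgy.comp (measurable_pi_apply j))
    have hDm : Measurable (fun xs : Fin N → X =>
        |J / Z - (∑ i, f (xs i) * g y (xs i)) / (∑ j, g y (xs j))|) :=
      (measurable_const.sub (hSφm.div hSψm)).abs
    have hratio : ∀ xs : Fin N → X,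
        |(∑ i, f (xs i) * g y (xs i)) / (∑ j, g y (xs j))| ≤ M := fun xs =>
      snis_ratio_bd Finset.univ_nonempty _ _ M (fun j _ => hg_pos y (xs j)) (fun i _ => hφb (xs i))
    have hDb : ∀ xs : Fin N → X,
        ‖|J / Z - (∑ i, f (xs i) * g y (xs i)) / (∑ j, g y (xs j))|‖ ≤ |J / Z| + M := by
      intro xs
      rw [Real.norm_eq_abs, abs_abs]
      calc |J / Z - (∑ i, f (xs i) * g y (xs i)) / (∑ j, g y (xs j))|
          ≤ |J / Z| + |(∑ i, f (xs i) * g y (xs i)) / (∑ j, g y (xs j))| := abs_sub _ _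
        _ ≤ |J / Z| + M := by gcongr; exact hratio xs
    have hmem : MemLp (fun xs : Fin N → X =>
        |J / Z - (∑ i, f (xs i) * g y (xs i)) / (∑ j, g y (xs j))|) 2
        (Measure.pi fun _ => π₀) :=
      MemLp.of_bound hDm.aestronglyMeasurable _ (ae_of_all _ hDb)
    have hvar := ProbabilityTheory.variance_nonneg (fun xs : Fin N → X =>
        |J / Z - (∑ i, f (xs i) * g y (xs i)) / (∑ j, g y (xs j))|) (Measure.pi fun _ => π₀)
    rw [ProbabilityTheory.variance_eq_sub hmem] at hvar
    simp only [Pi.pow_apply, sq_abs] at hvar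
    have hInn : (0:ℝ) ≤ ∫ xs : Fin N → X,
        |J / Z - (∑ i, f (xs i) * g y (xs i)) / (∑ j, g y (xs j))|
          ∂(Measure.pi fun _ => π₀) := integral_nonneg fun xs => abs_nonneg _
    nlinarith [hL2, hvar, hInn, hR0]
  · -- p = 2
    have e : ∀ xs : Fin N → X,
        |J / Z - (∑ i, f (xs i) * g y (xs i)) / (∑ j, g y (xs j))| ^ ((2:ℕ) : ℝ)
          = (J / Z - (∑ i, f (xs i) * g y (xs i)) / (∑ j, g y (xs j))) ^ 2 := by
      intro xs
      rw [Real.rpow_natCast, sq_abs]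
    rw [integral_congr_ae (ae_of_all _ e)]
    have step : (∫ xs : Fin N → X,
        (J / Z - (∑ i, f (xs i) * g y (xs i)) / (∑ j, g y (xs j))) ^ 2
          ∂(Measure.pi fun _ => π₀)) ^ (1 / ((2:ℕ) : ℝ))
        ≤ (R ^ 2) ^ (1 / ((2:ℕ) : ℝ)) :=
      Real.rpow_le_rpow hDnn hL2 (by positivity)
    refine step.trans (le_of_eq ?_)
    rw [← Real.rpow_natCast R 2, ← Real.rpow_mul hR0]
    norm_num
end

section
/- Assume K₂ := ∫_𝒴 ‖ℓ_y‖²_{L²(π₀)} η(dy) < ∞ (Bochner 2-integrability of the link function). Then for every bounded measurable f : 𝒳 → ℝ and every N ≥ 1, the averaged squared error of the self-normalized importance sampling estimator over a random observation satisfies ∫_𝒴 ∫_{𝒳^N} | π_y(f) − π_y^N(f) |² dπ₀^{⊗N} η(dy) ≤ 4 · ‖f‖_∞² · K₂ / N; in particular the L² error over the joint law of observation and samples decays at the rate O(N^{-1/2}). -/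
open MeasureTheory

section aux
variable {X : Type*} [MeasurableSpace X] {μ : Measure X} [IsProbabilityMeasure μ] {N : ℕ}

private lemma prod_trick (φ : Fin N → X → ℝ) (hφ : ∀ l, Integrable (φ l) μ) :
    Integrable (fun xs : Fin N → X => ∏ l, φ l (xs l)) (Measure.pi fun _ => μ) ∧
      ∫ xs : Fin N → X, ∏ l, φ l (xs l) ∂(Measure.pi fun _ => μ) = ∏ l, ∫ x, φ l x ∂μ := by
  letI : MeasureSpace X := ⟨μ⟩
  have hvol : (Measure.pi fun _ : Fin N => μ) = (volume : Measure (Fin N → X)) :=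
    (MeasureTheory.volume_pi).symm
  refine ⟨?_, ?_⟩
  · rw [hvol]; exact Integrable.fintype_prod_dep hφ
  · rw [hvol]; exact integral_fintype_prod_eq_prod φ

private lemma single_stats (k : X → ℝ) (hk : Integrable k μ) (i : Fin N) :
    Integrable (fun xs : Fin N → X => k (xs i)) (Measure.pi fun _ => μ) ∧
      ∫ xs : Fin N → X, k (xs i) ∂(Measure.pi fun _ => μ) = ∫ x, k x ∂μ := by
  classical
  set φ : Fin N → X → ℝ := fun l x => if l = i then k x else 1 with hφdef
  have hint : ∀ l, Integrable (φ l) μ := by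
    intro l
    by_cases h : l = i <;> simp [φ, h, hk, integrable_const]
  have key : (fun xs : Fin N → X => ∏ l, φ l (xs l)) = fun xs => k (xs i) := by
    funext xs
    simp [φ, Finset.prod_ite_eq']
  have keyI : ∀ l, ∫ x, φ l x ∂μ = if l = i then ∫ x, k x ∂μ else 1 := by
    intro l
    by_cases h : l = i <;> simp [φ, h]
  obtain ⟨H1, H2⟩ := prod_trick φ hint
  rw [key] at H1 H2
  refine ⟨H1, ?_⟩
  rw [H2]
  simp [keyI, Finset.prod_ite_eq']

private lemma pair_stats (k k' : X → ℝ) (hk : Integrable k μ) (hk' : Integrable k' μ)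
    {i j : Fin N} (hij : i ≠ j) :
    Integrable (fun xs : Fin N → X => k (xs i) * k' (xs j)) (Measure.pi fun _ => μ) ∧
      ∫ xs : Fin N → X, k (xs i) * k' (xs j) ∂(Measure.pi fun _ => μ)
        = (∫ x, k x ∂μ) * (∫ x, k' x ∂μ) := by
  classical
  set φ : Fin N → X → ℝ := fun l x => if l = i then k x else if l = j then k' x else 1 with hφdef
  have hint : ∀ l, Integrable (φ l) μ := by
    intro l
    by_cases h : l = i
    · simp [φ, h, hk]
    · by_cases h' : l = j <;> simp [φ, h, h', hk', hij.symm, integrable_const]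
  have hji : j ∈ Finset.univ.erase i := Finset.mem_erase.mpr ⟨hij.symm, Finset.mem_univ j⟩
  have key : (fun xs : Fin N → X => ∏ l, φ l (xs l)) = fun xs => k (xs i) * k' (xs j) := by
    funext xs
    rw [← Finset.mul_prod_erase Finset.univ _ (Finset.mem_univ i),
        ← Finset.mul_prod_erase _ _ hji, Finset.prod_eq_one, mul_one]
    · simp [φ, hij.symm]
    · intro l hl
      simp only [Finset.mem_erase] at hl
      simp [φ, hl.1, hl.2.1]
  have keyI : ∏ l, ∫ x, φ l x ∂μ = (∫ x, k x ∂μ) * (∫ x, k' x ∂μ) := by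
    rw [← Finset.mul_prod_erase Finset.univ _ (Finset.mem_univ i),
        ← Finset.mul_prod_erase _ _ hji, Finset.prod_eq_one, mul_one]
    · have h1 : ∫ x, φ i x ∂μ = ∫ x, k x ∂μ := by simp [φ]
      have h2 : ∫ x, φ j x ∂μ = ∫ x, k' x ∂μ := by simp [φ, hij.symm]
      rw [h1, h2]
    · intro l hl
      simp only [Finset.mem_erase] at hl
      have : ∫ x, φ l x ∂μ = 1 := by simp [φ, hl.1, hl.2.1]
      exact this
  obtain ⟨H1, H2⟩ := prod_trick φ hint
  rw [key] at H1 H2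
  exact ⟨H1, by rw [H2, keyI]⟩

private lemma sum_sq (k : X → ℝ) (hk : MemLp k 2 μ) (hk0 : ∫ x, k x ∂μ = 0) :
    Integrable (fun xs : Fin N → X => (∑ i, k (xs i)) ^ 2) (Measure.pi fun _ => μ) ∧
      ∫ xs : Fin N → X, (∑ i, k (xs i)) ^ 2 ∂(Measure.pi fun _ => μ)
        = N * ∫ x, k x ^ 2 ∂μ := by
  classical
  have hki : Integrable k μ := hk.integrable one_le_two
  have hk2 : Integrable (fun x => k x * k x) μ := by
    simpa [sq] using hk.integrable_sq
  have hterm : ∀ i j : Fin N,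
      Integrable (fun xs : Fin N → X => k (xs i) * k (xs j)) (Measure.pi fun _ => μ) := by
    intro i j
    rcases eq_or_ne i j with rfl | hij
    · exact (single_stats (fun x => k x * k x) hk2 i).1
    · exact (pair_stats k k hki hki hij).1
  have hval : ∀ i j : Fin N,
      ∫ xs : Fin N → X, k (xs i) * k (xs j) ∂(Measure.pi fun _ => μ)
        = if i = j then ∫ x, k x ^ 2 ∂μ else 0 := by
    intro i j
    rcases eq_or_ne i j with rfl | hij
    · simp only [if_pos rfl]
      have := (single_stats (fun x => k x * k x) hk2 i).2
      rw [this]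
      simp [sq]
    · rw [if_neg hij, (pair_stats k k hki hki hij).2, hk0, mul_zero]
  have hexp : (fun xs : Fin N → X => (∑ i, k (xs i)) ^ 2)
      = fun xs => ∑ i : Fin N, ∑ j : Fin N, k (xs i) * k (xs j) := by
    funext xs
    rw [sq, Finset.sum_mul_sum]
  constructor
  · rw [hexp]
    exact integrable_finset_sum _ fun i _ => integrable_finset_sum _ fun j _ => hterm i j
  · rw [hexp, integral_finset_sum _ fun i _ =>
      integrable_finset_sum _ fun j _ => hterm i j]
    have : ∀ i : Fin N, ∫ xs : Fin N → X, (∑ j : Fin N, k (xs i) * k (xs j))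
        ∂(Measure.pi fun _ => μ) = ∫ x, k x ^ 2 ∂μ := by
      intro i
      rw [integral_finset_sum _ fun j _ => hterm i j]
      simp_rw [hval]
      simp
    simp_rw [this]
    simp [Finset.card_univ, mul_comm]

set_option maxHeartbeats 2000000 in
private lemma per_y (w : X → ℝ) (hw_meas : Measurable w) (hw_pos : ∀ x, 0 < w x)
    (hw2 : MemLp w 2 μ) (f : X → ℝ) (hf : Measurable f) (M : ℝ)
    (hM : ∀ x, |f x| ≤ M) (hZ : 0 < ∫ x, w x ∂μ) (hN : 1 ≤ N) :
    ∫ xs : Fin N → X,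
        ((∫ x, f x * w x ∂μ) / (∫ x, w x ∂μ)
            - (∑ i, f (xs i) * w (xs i)) / (∑ j, w (xs j))) ^ 2
        ∂(Measure.pi fun _ => μ)
      ≤ 4 * M ^ 2 * ((∫ x, w x ^ 2 ∂μ) / (∫ x, w x ∂μ) ^ 2) / N := by
  classical
  haveI : Nonempty (Fin N) := ⟨⟨0, by omega⟩⟩
  set P : Measure (Fin N → X) := Measure.pi fun _ => μ with hP
  haveI : IsProbabilityMeasure P := by rw [hP]; infer_instance
  set Z : ℝ := ∫ x, w x ∂μ with hZdef
  set I : ℝ := ∫ x, f x * w x ∂μ with hIdef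
  set ρ : ℝ := ∫ x, w x ^ 2 ∂μ with hρdef
  have hNpos : (0:ℝ) < N := by exact_mod_cast hN
  have hZne : Z ≠ 0 := ne_of_gt hZ
  have hM0 : 0 ≤ M := le_trans (abs_nonneg _) (hM (Classical.choice
    (by
      by_contra h
      rw [not_nonempty_iff] at h
      have h1 : μ Set.univ = 1 := measure_univ
      rw [Set.univ_eq_empty_iff.mpr h] at h1
      simp at h1)))
  have hρ0 : 0 ≤ ρ := integral_nonneg fun x => sq_nonneg _
  -- basic functions on X
  set h1 : X → ℝ := fun x => f x * w x with hh1
  have h1meas : Measurable h1 := hf.mul hw_meas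
  have h1ℒ2 : MemLp h1 2 μ := by
    refine MemLp.of_le_mul (c := M) hw2 h1meas.aestronglyMeasurable (ae_of_all _ fun x => ?_)
    simp only [h1, norm_mul, Real.norm_eq_abs]
    exact mul_le_mul_of_nonneg_right (hM x) (abs_nonneg _)
  have hwint : Integrable w μ := hw2.integrable one_le_two
  have h1int : Integrable h1 μ := h1ℒ2.integrable one_le_two
  have hw2int : Integrable (fun x => w x ^ 2) μ := hw2.integrable_sq
  have h1sqint : Integrable (fun x => h1 x ^ 2) μ := h1ℒ2.integrable_sq
  -- second moments of centered functions
  set k₁ : X → ℝ := fun x => h1 x - I with hk₁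
  set k₂ : X → ℝ := fun x => w x - Z with hk₂
  have hk₁ℒ2 : MemLp k₁ 2 μ := h1ℒ2.sub (memLp_const I)
  have hk₂ℒ2 : MemLp k₂ 2 μ := hw2.sub (memLp_const Z)
  have hk₁0 : ∫ x, k₁ x ∂μ = 0 := by
    rw [hk₁]
    rw [integral_sub h1int (integrable_const I), integral_const]
    simp [hIdef]
  have hk₂0 : ∫ x, k₂ x ∂μ = 0 := by
    rw [hk₂]
    rw [integral_sub hwint (integrable_const Z), integral_const]
    simp [hZdef]
  have hfx_sq : ∀ x, f x ^ 2 ≤ M ^ 2 := by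
    intro x
    have := pow_le_pow_left₀ (abs_nonneg (f x)) (hM x) 2
    simpa [sq_abs] using this
  have hh1sq_le : ∫ x, h1 x ^ 2 ∂μ ≤ M ^ 2 * ρ := by
    rw [hρdef, ← integral_const_mul]
    refine integral_mono h1sqint (hw2int.const_mul _) fun x => ?_
    simp only [h1, mul_pow]
    exact mul_le_mul_of_nonneg_right (hfx_sq x) (sq_nonneg _)
  have hk₁sq_le : ∫ x, k₁ x ^ 2 ∂μ ≤ M ^ 2 * ρ := by
    have hexp : ∀ x, k₁ x ^ 2 = h1 x ^ 2 - (2 * I) * h1 x + I ^ 2 := by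
      intro x; simp only [hk₁]; ring
    have hints : Integrable (fun x => h1 x ^ 2 - 2 * I * h1 x) μ := by
      have := h1sqint.sub (h1int.const_mul (2 * I))
      exact this
    have : ∫ x, k₁ x ^ 2 ∂μ = ∫ x, h1 x ^ 2 ∂μ - I ^ 2 := by
      simp_rw [hexp]
      rw [integral_add hints (integrable_const _),
        integral_sub h1sqint (by simpa using h1int.const_mul (2 * I)), integral_const]
      have h2I : ∫ x, 2 * I * h1 x ∂μ = 2 * I * I := by
        rw [integral_const_mul]
      rw [h2I]
      simp [hIdef]
      try ring
    rw [this]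
    nlinarith [sq_nonneg I]
  have hk₂sq_le : ∫ x, k₂ x ^ 2 ∂μ ≤ ρ := by
    have hexp : ∀ x, k₂ x ^ 2 = w x ^ 2 - (2 * Z) * w x + Z ^ 2 := by
      intro x; simp only [hk₂]; ring
    have hints : Integrable (fun x => w x ^ 2 - 2 * Z * w x) μ := by
      have := hw2int.sub (hwint.const_mul (2 * Z))
      exact this
    have : ∫ x, k₂ x ^ 2 ∂μ = ∫ x, w x ^ 2 ∂μ - Z ^ 2 := by
      simp_rw [hexp]
      rw [integral_add hints (integrable_const _),
        integral_sub hw2int (by simpa using hwint.const_mul (2 * Z)), integral_const]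
      have h2Z : ∫ x, 2 * Z * w x ∂μ = 2 * Z * Z := by
        rw [integral_const_mul]
      rw [h2Z]
      simp [hZdef]
      try ring
    rw [this, hρdef]
    nlinarith [sq_nonneg Z]
  obtain ⟨hK1int, hK1val⟩ := sum_sq k₁ hk₁ℒ2 hk₁0
  obtain ⟨hK2int, hK2val⟩ := sum_sq k₂ hk₂ℒ2 hk₂0
  -- functions on the product space
  set S₁ : (Fin N → X) → ℝ := fun xs => ∑ i, h1 (xs i) with hS₁
  set S₂ : (Fin N → X) → ℝ := fun xs => ∑ j, w (xs j) with hS₂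
  set D : (Fin N → X) → ℝ := fun xs => I / Z - S₁ xs / S₂ xs with hD
  set a : (Fin N → X) → ℝ := fun xs => (N * I - S₁ xs) / (N * Z) with ha
  set c : (Fin N → X) → ℝ := fun xs => (S₂ xs - N * Z) / (N * Z) with hc
  have hS₂pos : ∀ xs, 0 < S₂ xs := fun xs =>
    Finset.sum_pos (fun j _ => hw_pos (xs j)) Finset.univ_nonempty
  have hS₁meas : Measurable S₁ :=
    Finset.measurable_sum _ fun i _ => h1meas.comp (measurable_pi_apply i)
  have hS₂meas : Measurable S₂ :=
    Finset.measurable_sum _ fun j _ => hw_meas.comp (measurable_pi_apply j)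
  have hDmeas : Measurable D := measurable_const.sub (hS₁meas.div hS₂meas)
  clear_value c; clear_value a; clear_value D; clear_value S₂; clear_value S₁; try clear_value k₂; try clear_value k₁; try clear_value h1; try clear_value ρ; try clear_value I; try clear_value Z
  have hsum₁ : ∀ xs : Fin N → X, ∑ i, k₁ (xs i) = S₁ xs - N * I := by
    intro xs
    simp only [hk₁, Finset.sum_sub_distrib, Finset.sum_const, Finset.card_univ,
      Fintype.card_fin, nsmul_eq_mul, hS₁]
  have hsum₂ : ∀ xs : Fin N → X, ∑ i, k₂ (xs i) = S₂ xs - N * Z := by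
    intro xs
    simp only [hk₂, Finset.sum_sub_distrib, Finset.sum_const, Finset.card_univ,
      Fintype.card_fin, nsmul_eq_mul, hS₂]
  have hS₁le : ∀ xs, |S₁ xs| ≤ M * S₂ xs := by
    intro xs
    rw [hS₁, hS₂]
    calc |∑ i, h1 (xs i)| ≤ ∑ i, |h1 (xs i)| := Finset.abs_sum_le_sum_abs _ _
    _ ≤ ∑ i, M * w (xs i) := by
        refine Finset.sum_le_sum fun i _ => ?_
        simp only [hh1]
        rw [abs_mul, abs_of_pos (hw_pos _)]
        exact mul_le_mul_of_nonneg_right (hM _) (le_of_lt (hw_pos _))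
    _ = M * ∑ j, w (xs j) := by rw [Finset.mul_sum]
  have hratio : ∀ xs, |S₁ xs / S₂ xs| ≤ M := by
    intro xs
    rw [abs_div, abs_of_pos (hS₂pos xs), div_le_iff₀ (hS₂pos xs)]
    exact hS₁le xs
  have hNne : (N:ℝ) ≠ 0 := ne_of_gt hNpos
  have hb_eq : ∀ xs, D xs - a xs = (S₁ xs / S₂ xs) * c xs := by
    intro xs
    have hS₂ne : S₂ xs ≠ 0 := (hS₂pos xs).ne'
    simp only [hD, ha, hc]
    field_simp
    ring
  have hb_le : ∀ xs, (D xs - a xs) ^ 2 ≤ M ^ 2 * c xs ^ 2 := by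
    intro xs
    rw [hb_eq xs, mul_pow]
    exact mul_le_mul_of_nonneg_right (by
      have := hratio xs
      nlinarith [abs_nonneg (S₁ xs / S₂ xs), sq_abs (S₁ xs / S₂ xs)]) (sq_nonneg _)
  have hDptle : ∀ xs, D xs ^ 2 ≤ 2 * a xs ^ 2 + 2 * M ^ 2 * c xs ^ 2 := by
    intro xs
    have h2 : D xs ^ 2 ≤ 2 * a xs ^ 2 + 2 * (D xs - a xs) ^ 2 := by nlinarith [sq_nonneg (a xs - (D xs - a xs))]
    nlinarith [hb_le xs]
  -- integrability on the product space
  have ha_sq_eq : (fun xs => a xs ^ 2)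
      = fun xs => (1 / (N * Z) ^ 2) * (∑ i, k₁ (xs i)) ^ 2 := by
    funext xs
    rw [hsum₁ xs]
    simp only [ha]
    rw [div_pow]
    ring
  have hc_sq_eq : (fun xs => c xs ^ 2)
      = fun xs => (1 / (N * Z) ^ 2) * (∑ i, k₂ (xs i)) ^ 2 := by
    funext xs
    rw [hsum₂ xs]
    simp only [hc]
    rw [div_pow]
    ring
  have ha2int : Integrable (fun xs => a xs ^ 2) P := by
    rw [ha_sq_eq]; exact hK1int.const_mul _
  have hc2int : Integrable (fun xs => c xs ^ 2) P := by
    rw [hc_sq_eq]; exact hK2int.const_mul _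
  have hIle : |I / Z| ≤ M := by
    rw [abs_div, abs_of_pos hZ, div_le_iff₀ hZ]
    calc |I| ≤ ∫ x, |h1 x| ∂μ := by
          have := norm_integral_le_integral_norm (μ := μ) h1
          simpa [Real.norm_eq_abs, hIdef] using this
    _ ≤ ∫ x, M * w x ∂μ := by
        refine integral_mono h1int.abs (hwint.const_mul _) fun x => ?_
        simp only [hh1]
        rw [abs_mul, abs_of_pos (hw_pos _)]
        exact mul_le_mul_of_nonneg_right (hM _) (le_of_lt (hw_pos _))
    _ = M * Z := by rw [integral_const_mul, hZdef]
  have hDbdd : ∀ xs, ‖D xs‖ ≤ 2 * M := by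
    intro xs
    rw [Real.norm_eq_abs, hD]
    calc |I / Z - S₁ xs / S₂ xs| ≤ |I / Z| + |S₁ xs / S₂ xs| := abs_sub _ _
    _ ≤ M + M := add_le_add hIle (hratio xs)
    _ = 2 * M := by ring
  have hDℒ2 : MemLp D 2 P := MemLp.of_bound hDmeas.aestronglyMeasurable _ (ae_of_all _ hDbdd)
  have hD2int : Integrable (fun xs => D xs ^ 2) P := hDℒ2.integrable_sq
  -- integral values
  have hEa : ∫ xs, a xs ^ 2 ∂P = (∫ x, k₁ x ^ 2 ∂μ) / (N * Z ^ 2) := by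
    rw [ha_sq_eq, integral_const_mul, hK1val]
    field_simp [hNne, hZne]
  have hEc : ∫ xs, c xs ^ 2 ∂P = (∫ x, k₂ x ^ 2 ∂μ) / (N * Z ^ 2) := by
    rw [hc_sq_eq, integral_const_mul, hK2val]
    field_simp [hNne, hZne]
  -- the goal, rephrased
  have hgoal : ∫ xs, D xs ^ 2 ∂P ≤ 4 * M ^ 2 * (ρ / Z ^ 2) / N := by
    have step1 : ∫ xs, D xs ^ 2 ∂P ≤ ∫ xs, (2 * a xs ^ 2 + 2 * M ^ 2 * c xs ^ 2) ∂P :=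
      integral_mono hD2int ((ha2int.const_mul 2).add (hc2int.const_mul (2 * M ^ 2)))
        fun xs => hDptle xs
    have step2 : ∫ xs, (2 * a xs ^ 2 + 2 * M ^ 2 * c xs ^ 2) ∂P
        = 2 * ((∫ x, k₁ x ^ 2 ∂μ) / (N * Z ^ 2)) + 2 * M ^ 2 * ((∫ x, k₂ x ^ 2 ∂μ) / (N * Z ^ 2)) := by
      rw [integral_add (ha2int.const_mul 2) (hc2int.const_mul (2 * M ^ 2)),
        integral_const_mul, integral_const_mul, hEa, hEc]
    have hNZ : (0:ℝ) < N * Z ^ 2 := by positivity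
    have step3 : 2 * ((∫ x, k₁ x ^ 2 ∂μ) / (N * Z ^ 2)) + 2 * M ^ 2 * ((∫ x, k₂ x ^ 2 ∂μ) / (N * Z ^ 2))
        ≤ 2 * ((M ^ 2 * ρ) / (N * Z ^ 2)) + 2 * M ^ 2 * (ρ / (N * Z ^ 2)) := by
      gcongr
    have step4 : 2 * ((M ^ 2 * ρ) / (N * Z ^ 2)) + 2 * M ^ 2 * (ρ / (N * Z ^ 2))
        = 4 * M ^ 2 * (ρ / Z ^ 2) / N := by
      ring
    calc ∫ xs, D xs ^ 2 ∂P ≤ ∫ xs, (2 * a xs ^ 2 + 2 * M ^ 2 * c xs ^ 2) ∂P := step1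
    _ = 2 * ((∫ x, k₁ x ^ 2 ∂μ) / (N * Z ^ 2)) + 2 * M ^ 2 * ((∫ x, k₂ x ^ 2 ∂μ) / (N * Z ^ 2)) := step2
    _ ≤ 2 * ((M ^ 2 * ρ) / (N * Z ^ 2)) + 2 * M ^ 2 * (ρ / (N * Z ^ 2)) := step3
    _ = 4 * M ^ 2 * (ρ / Z ^ 2) / N := step4
  have hfun : (fun xs : Fin N → X =>
      (I / Z - (∑ i, f (xs i) * w (xs i)) / (∑ j, w (xs j))) ^ 2)
      = fun xs => D xs ^ 2 := by
    funext xs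
    simp only [hD, hS₁, hS₂, hh1]
  rw [hfun]
  exact hgoal

end aux

/-- If `K₂ := ∫_𝒴 ‖ℓ_y‖²_{L²(π₀)} η(dy) < ∞` (Bochner 2-integrability of
the link function), then for every bounded measurable `f` and `N ≥ 1`, the averaged
squared error of the self-normalized importance sampling estimator over a random
observation satisfies
`∫_𝒴 E[ |π_y(f) − π_y^N(f)|² ] η(dy) ≤ 4 ‖f‖_∞² K₂ / N`. -/
theorem stmt8 {X : Type*} [MeasurableSpace X] {dy : ℕ}
    (π₀ : Measure X) [IsProbabilityMeasure π₀]
    (g : (Fin dy → ℝ) → X → ℝ)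
    (hg_meas : Measurable (Function.uncurry g))
    (hg_pos : ∀ y x, 0 < g y x)
    (hg_norm : ∀ x, ∫ y, g y x = 1)
    (hg_L2 : ∀ y, MemLp (g y) 2 π₀)
    (hZ : ∀ y, 0 < ∫ x, g y x ∂π₀)
    (hK : Integrable
        (fun y => (∫ x, g y x ^ 2 ∂π₀) / (∫ x, g y x ∂π₀) ^ 2)
        (volume.withDensity fun y => ENNReal.ofReal (∫ x, g y x ∂π₀)))
    (f : X → ℝ) (hf : Measurable f) (hfb : BddAbove (Set.range fun x => |f x|))
    (N : ℕ) (hN : 1 ≤ N) :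
    ∫⁻ y, ENNReal.ofReal (∫ xs : Fin N → X,
          ((∫ x, f x * g y x ∂π₀) / (∫ x, g y x ∂π₀)
              - (∑ i, f (xs i) * g y (xs i)) / (∑ j, g y (xs j))) ^ 2
          ∂(Measure.pi fun _ => π₀))
        ∂(volume.withDensity fun y => ENNReal.ofReal (∫ x, g y x ∂π₀))
      ≤ ENNReal.ofReal (4 * (⨆ x, |f x|) ^ 2 *
          (∫ y, (∫ x, g y x ^ 2 ∂π₀) / (∫ x, g y x ∂π₀) ^ 2
            ∂(volume.withDensity fun y => ENNReal.ofReal (∫ x, g y x ∂π₀))) / N) := by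
  set η : Measure (Fin dy → ℝ) :=
    volume.withDensity fun y => ENNReal.ofReal (∫ x, g y x ∂π₀) with hη
  set M : ℝ := ⨆ x, |f x| with hM
  have hMb : ∀ x, |f x| ≤ M := fun x => le_ciSup hfb x
  set q : (Fin dy → ℝ) → ℝ :=
    fun y => (∫ x, g y x ^ 2 ∂π₀) / (∫ x, g y x ∂π₀) ^ 2 with hq
  have hq0 : ∀ y, 0 ≤ q y := fun y =>
    div_nonneg (integral_nonneg fun x => sq_nonneg _) (sq_nonneg _)
  have hwmeas : ∀ y, Measurable (g y) := by
    intro y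
    have : (fun x => Function.uncurry g (y, x)) = g y := rfl
    exact this ▸ hg_meas.comp (measurable_const.prodMk measurable_id)
  have hstep : ∀ y : Fin dy → ℝ,
      ∫ xs : Fin N → X,
          ((∫ x, f x * g y x ∂π₀) / (∫ x, g y x ∂π₀)
              - (∑ i, f (xs i) * g y (xs i)) / (∑ j, g y (xs j))) ^ 2
          ∂(Measure.pi fun _ => π₀)
        ≤ 4 * M ^ 2 * q y / N := fun y =>
    per_y (g y) (hwmeas y) (hg_pos y) (hg_L2 y) f hf M hMb (hZ y) hN
  calc ∫⁻ y, ENNReal.ofReal (∫ xs : Fin N → X,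
          ((∫ x, f x * g y x ∂π₀) / (∫ x, g y x ∂π₀)
              - (∑ i, f (xs i) * g y (xs i)) / (∑ j, g y (xs j))) ^ 2
          ∂(Measure.pi fun _ => π₀)) ∂η
      ≤ ∫⁻ y, ENNReal.ofReal (4 * M ^ 2 * q y / N) ∂η :=
        lintegral_mono fun y => ENNReal.ofReal_le_ofReal (hstep y)
    _ = ENNReal.ofReal (∫ y, 4 * M ^ 2 * q y / N ∂η) := by
        rw [ofReal_integral_eq_lintegral_ofReal]
        · have : (fun y => 4 * M ^ 2 * q y / N) = fun y => (4 * M ^ 2 / N) * q y := by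
            funext y; ring
          rw [this]
          exact hK.const_mul _
        · exact ae_of_all _ fun y => by positivity
    _ = ENNReal.ofReal (4 * M ^ 2 * (∫ y, q y ∂η) / N) := by
        congr 1
        have : (fun y => 4 * M ^ 2 * q y / N) = fun y => (4 * M ^ 2 / N) * q y := by
          funext y; ring
        rw [this, integral_const_mul]
        ring
end

section
/- Consider an elliptically symmetric likelihood: g(y,x) := φ( ψ( ‖y − h(x)‖_R ) ), where R ∈ ℝ^{d_y×d_y} is symmetric positive definite, ‖v‖_R := √(vᵀ R v), h : 𝒳 → ℝ^{d_y} is measurable with M_R := sup_{x∈𝒳} ‖h(x)‖_R < ∞, ψ : [0,∞) → ℝ is non-decreasing, φ : ℝ → (0,∞) is non-increasing, and ∫_{ℝ^{d_y}} φ(ψ(‖y‖_R)) dy = 1. Then the second moment of the link function satisfies ∫_𝒴 ‖ℓ_y‖²_{L²(π₀)} η(dy) ≤ ∫_{ℝ^{d_y}} φ( ψ( ‖y‖_R ) )² / φ( ψ( ‖y‖_R + 2 M_R ) ) dy. -/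
open MeasureTheory Matrix

lemma l2_tri {dy : ℕ} (u v : Fin dy → ℝ) :
    Real.sqrt ((u + v) ⬝ᵥ (u + v)) ≤ Real.sqrt (u ⬝ᵥ u) + Real.sqrt (v ⬝ᵥ v) := by
  have key : ∀ w : Fin dy → ℝ, Real.sqrt (w ⬝ᵥ w) = ‖(WithLp.equiv 2 (Fin dy → ℝ)).symm w‖ := by
    intro w
    rw [EuclideanSpace.norm_eq]
    congr 1
    simp [dotProduct, sq]
  rw [key, key, key]
  exact norm_add_le _ _

open scoped MatrixOrder in
lemma aux_tri {dy : ℕ} {R : Matrix (Fin dy) (Fin dy) ℝ} (hR : R.PosDef) (u v : Fin dy → ℝ) :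
    Real.sqrt ((u + v) ⬝ᵥ (R *ᵥ (u + v))) ≤ Real.sqrt (u ⬝ᵥ (R *ᵥ u)) + Real.sqrt (v ⬝ᵥ (R *ᵥ v)) := by
  have hS := hR.posSemidef
  have hherm : (CFC.sqrt R)ᵀ = CFC.sqrt R := show (CFC.sqrt R).IsSymm by
    simpa [conjTranspose_eq_transpose_of_trivial] using (CFC.sqrt_nonneg R).posSemidef.1
  have key : ∀ w : Fin dy → ℝ, w ⬝ᵥ (R *ᵥ w) = (CFC.sqrt R *ᵥ w) ⬝ᵥ (CFC.sqrt R *ᵥ w) := by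
    intro w
    conv_lhs => rw [← CFC.sqrt_mul_sqrt_self R hS.nonneg]
    rw [← mulVec_mulVec, dotProduct_mulVec,
      show (w ᵥ* CFC.sqrt R) = CFC.sqrt R *ᵥ w from by rw [← hherm, vecMul_transpose, hherm]]
  rw [key, key, key, mulVec_add]
  exact l2_tri _ _

lemma aux_cont {dy : ℕ} (R : Matrix (Fin dy) (Fin dy) ℝ) :
    Continuous (fun v : Fin dy → ℝ => Real.sqrt (v ⬝ᵥ (R *ᵥ v))) := by
  apply Real.continuous_sqrt.comp
  simp only [dotProduct, mulVec]
  exact continuous_finset_sum _ fun i _ => (continuous_apply i).mul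
    (continuous_finset_sum _ fun j _ => (continuous_const.mul (continuous_apply j)))

/-- For an elliptically symmetric likelihood
`g(y,x) = φ(ψ(‖y − h(x)‖_R))` with bounded observation map
(`M_R := sup_x ‖h(x)‖_R < ∞`), the second moment of the link function is bounded by
`∫_𝒴 ‖ℓ_y‖²_{L²(π₀)} η(dy) ≤ ∫_{ℝ^{d_y}} φ(ψ(‖y‖_R))² / φ(ψ(‖y‖_R + 2 M_R)) dy`. -/
theorem stmt15 {X : Type*} [MeasurableSpace X] {dy : ℕ}
    (π₀ : Measure X) [IsProbabilityMeasure π₀]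
    (R : Matrix (Fin dy) (Fin dy) ℝ) (hR : R.PosDef)
    (h : X → Fin dy → ℝ) (hh : Measurable h)
    (hhb : BddAbove (Set.range fun x => Real.sqrt (h x ⬝ᵥ (R *ᵥ h x))))
    (ψ : ℝ → ℝ) (hψ : MonotoneOn ψ (Set.Ici 0))
    (φ : ℝ → ℝ) (hφ_pos : ∀ s, 0 < φ s) (hφ : Antitone φ)
    (hnorm : ∫ y : Fin dy → ℝ, φ (ψ (Real.sqrt (y ⬝ᵥ (R *ᵥ y)))) = 1) :
    ∫⁻ y : Fin dy → ℝ,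
        ENNReal.ofReal
          ((∫ x, φ (ψ (Real.sqrt ((y - h x) ⬝ᵥ (R *ᵥ (y - h x))))) ^ 2 ∂π₀)
            / (∫ x, φ (ψ (Real.sqrt ((y - h x) ⬝ᵥ (R *ᵥ (y - h x))))) ∂π₀) ^ 2)
        ∂(volume.withDensity fun y =>
            ENNReal.ofReal (∫ x, φ (ψ (Real.sqrt ((y - h x) ⬝ᵥ (R *ᵥ (y - h x))))) ∂π₀))
      ≤ ∫⁻ y : Fin dy → ℝ,
          ENNReal.ofReal
            (φ (ψ (Real.sqrt (y ⬝ᵥ (R *ᵥ y)))) ^ 2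
              / φ (ψ (Real.sqrt (y ⬝ᵥ (R *ᵥ y))
                  + 2 * (⨆ x, Real.sqrt (h x ⬝ᵥ (R *ᵥ h x)))))) := by
  classical
  set M : ℝ := ⨆ x, Real.sqrt (h x ⬝ᵥ (R *ᵥ h x)) with hMdef
  set n : (Fin dy → ℝ) → ℝ := fun v => Real.sqrt (v ⬝ᵥ (R *ᵥ v)) with hndef
  set F : ℝ → ℝ := fun t => φ (ψ (max t 0)) with hFdef
  have hn0 : ∀ v, 0 ≤ n v := fun v => Real.sqrt_nonneg _
  have hF_anti : Antitone F := by
    intro a b hab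
    exact hφ (hψ (le_max_right a 0) (le_max_right b 0) (max_le_max hab le_rfl))
  have hFpos : ∀ t, 0 < F t := fun t => hφ_pos _
  have hFC : ∀ t, F t ≤ φ (ψ 0) := fun t =>
    hφ (hψ (Set.mem_Ici.mpr le_rfl) (le_max_right t 0) (le_max_right t 0))
  -- X is nonempty
  have hXne : Nonempty X := by
    by_contra hempty
    rw [not_nonempty_iff] at hempty
    have h1 : π₀ Set.univ = 1 := measure_univ
    rw [Set.univ_eq_empty_iff.mpr hempty, measure_empty] at h1
    exact zero_ne_one h1
  have hMx : ∀ x, n (h x) ≤ M := fun x => le_ciSup hhb x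
  have hM0 : 0 ≤ M := le_trans (hn0 (h hXne.some)) (hMx hXne.some)
  -- triangle facts
  have htri : ∀ u v, n (u + v) ≤ n u + n v := fun u v => aux_tri hR u v
  have hneg : ∀ v, n (-v) = n v := by
    intro v
    simp [hndef, Matrix.mulVec_neg, neg_dotProduct, dotProduct_neg]
  have hsub : ∀ (y : Fin dy → ℝ) x, n (y - h x) ≤ n y + M := by
    intro y x
    rw [sub_eq_add_neg]
    calc n (y + -(h x)) ≤ n y + n (-(h x)) := htri _ _
      _ = n y + n (h x) := by rw [hneg]
      _ ≤ n y + M := by linarith [hMx x]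
  have hplus : ∀ (y : Fin dy → ℝ) x, n (y + h x) ≤ n y + M := by
    intro y x
    calc n (y + h x) ≤ n y + n (h x) := htri _ _
      _ ≤ n y + M := by linarith [hMx x]
  -- rewrite the goal in terms of F and n
  have grw : ∀ v : Fin dy → ℝ, φ (ψ (Real.sqrt (v ⬝ᵥ (R *ᵥ v)))) = F (n v) := by
    intro v
    simp only [hFdef, hndef, max_eq_left (Real.sqrt_nonneg _)]
  have grw2 : ∀ v : Fin dy → ℝ,
      φ (ψ (Real.sqrt (v ⬝ᵥ (R *ᵥ v)) + 2 * M)) = F (n v + 2 * M) := by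
    intro v
    have : (0:ℝ) ≤ Real.sqrt (v ⬝ᵥ (R *ᵥ v)) + 2 * M := by
      have := Real.sqrt_nonneg (v ⬝ᵥ (R *ᵥ v)); linarith
    simp only [hFdef, hndef, max_eq_left this]
  simp only [grw, grw2]
  -- measurability
  have hn_cont : Continuous n := aux_cont R
  have hFm : Measurable F := hF_anti.measurable
  have hgm : Measurable (fun p : (Fin dy → ℝ) × X => F (n (p.1 - h p.2))) :=
    hFm.comp (hn_cont.measurable.comp (measurable_fst.sub (hh.comp measurable_snd)))
  have hZm : Measurable (fun y : Fin dy → ℝ => ∫ x, F (n (y - h x)) ∂π₀) :=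
    hgm.stronglyMeasurable.integral_prod_right'.measurable
  have hAm : Measurable (fun y : Fin dy → ℝ => ∫ x, F (n (y - h x)) ^ 2 ∂π₀) :=
    (hgm.pow_const 2).stronglyMeasurable.integral_prod_right'.measurable
  -- integrability in x for fixed y
  have hmx : ∀ y : Fin dy → ℝ, Measurable (fun x => F (n (y - h x))) := fun y =>
    hFm.comp (hn_cont.measurable.comp (measurable_const.sub hh))
  have hgi : ∀ y : Fin dy → ℝ, Integrable (fun x => F (n (y - h x))) π₀ := by
    intro y
    refine (integrable_const (φ (ψ 0))).mono' (hmx y).aestronglyMeasurable ?_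
    filter_upwards with x
    rw [Real.norm_eq_abs, abs_of_pos (hFpos _)]
    exact hFC _
  have hgi2 : ∀ y : Fin dy → ℝ, Integrable (fun x => F (n (y - h x)) ^ 2) π₀ := by
    intro y
    refine (integrable_const ((φ (ψ 0)) ^ 2)).mono' ((hmx y).pow_const 2).aestronglyMeasurable ?_
    filter_upwards with x
    rw [Real.norm_eq_abs, abs_of_pos (pow_pos (hFpos _) 2)]
    exact pow_le_pow_left₀ (hFpos _).le (hFC _) 2
  -- Z is bounded below by F (n y + M) > 0
  have hZlb : ∀ y : Fin dy → ℝ, F (n y + M) ≤ ∫ x, F (n (y - h x)) ∂π₀ := by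
    intro y
    calc F (n y + M) = ∫ _x, F (n y + M) ∂π₀ := by simp
      _ ≤ ∫ x, F (n (y - h x)) ∂π₀ :=
        integral_mono (integrable_const _) (hgi y) fun x => hF_anti (hsub y x)
  have hZpos : ∀ y : Fin dy → ℝ, 0 < ∫ x, F (n (y - h x)) ∂π₀ :=
    fun y => lt_of_lt_of_le (hFpos _) (hZlb y)
  -- step 1: unfold withDensity
  rw [lintegral_withDensity_eq_lintegral_mul volume hZm.ennreal_ofReal
    ((show Measurable (fun y : Fin dy → ℝ => (∫ x, F (n (y - h x)) ^ 2 ∂π₀) / (∫ x, F (n (y - h x)) ∂π₀) ^ 2)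
      from hAm.div (hZm.pow_const 2)).ennreal_ofReal)]
  -- step 2: pointwise bound by a double integral
  have step2 : ∀ y : Fin dy → ℝ,
      ENNReal.ofReal (∫ x, F (n (y - h x)) ∂π₀) *
        ENNReal.ofReal ((∫ x, F (n (y - h x)) ^ 2 ∂π₀) / (∫ x, F (n (y - h x)) ∂π₀) ^ 2)
      ≤ ∫⁻ x, ENNReal.ofReal (F (n (y - h x)) ^ 2 / F (n y + M)) ∂π₀ := by
    intro y
    set Z := ∫ x, F (n (y - h x)) ∂π₀ with hZdef
    set A := ∫ x, F (n (y - h x)) ^ 2 ∂π₀ with hAdef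
    have hZ : 0 < Z := hZpos y
    have hA0 : 0 ≤ A := integral_nonneg fun x => sq_nonneg _
    have e1 : ENNReal.ofReal Z * ENNReal.ofReal (A / Z ^ 2) = ENNReal.ofReal (A / Z) := by
      rw [← ENNReal.ofReal_mul hZ.le]
      congr 1
      field_simp
    rw [e1]
    have e2 : A / Z ≤ A / F (n y + M) := by
      apply div_le_div_of_nonneg_left hA0 (hFpos _) (hZlb y)
    refine le_trans (ENNReal.ofReal_le_ofReal e2) ?_
    have e3 : A / F (n y + M) = ∫ x, F (n (y - h x)) ^ 2 / F (n y + M) ∂π₀ :=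
      (integral_div _ _).symm
    rw [e3, ofReal_integral_eq_lintegral_ofReal ((hgi2 y).div_const _)
      (Filter.Eventually.of_forall fun x => div_nonneg (sq_nonneg _) (hFpos _).le)]
  refine le_trans (lintegral_mono step2) ?_
  -- step 3: Tonelli
  have hswap : (∫⁻ y : Fin dy → ℝ, ∫⁻ x, ENNReal.ofReal (F (n (y - h x)) ^ 2 / F (n y + M)) ∂π₀)
      = ∫⁻ x, ∫⁻ y : Fin dy → ℝ, ENNReal.ofReal (F (n (y - h x)) ^ 2 / F (n y + M)) ∂volume ∂π₀ := by
    apply lintegral_lintegral_swap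
    apply Measurable.aemeasurable
    exact (((hgm.pow_const 2).div
      ((hFm.comp ((hn_cont.measurable.comp measurable_fst).add_const M)))).ennreal_ofReal)
  rw [hswap]
  -- step 4: translation invariance and pointwise bound for fixed x
  have step4 : ∀ x : X,
      (∫⁻ y : Fin dy → ℝ, ENNReal.ofReal (F (n (y - h x)) ^ 2 / F (n y + M)) ∂volume)
      ≤ ∫⁻ y : Fin dy → ℝ, ENNReal.ofReal (F (n y) ^ 2 / F (n y + 2 * M)) ∂volume := by
    intro x
    rw [← lintegral_add_right_eq_self
      (fun y => ENNReal.ofReal (F (n (y - h x)) ^ 2 / F (n y + M))) (h x)]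
    simp only [add_sub_cancel_right]
    refine lintegral_mono fun y => ENNReal.ofReal_le_ofReal ?_
    apply div_le_div_of_nonneg_left (sq_nonneg _) (hFpos _)
    apply hF_anti
    linarith [hplus y x]
  refine le_trans (lintegral_mono step4) ?_
  rw [lintegral_const, measure_univ, mul_one]
end
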